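/- arXiv:1010.3267 — 4 statements merged into one kernel-verified Lean document; each statement's English description precedes it below -/
import Mathlib

section
/- The function x ↦ m(√x), where m is the Mills ratio of the standard normal law, is strictly completely monotonic on (0,∞), i.e., for every integer n ≥ 0 and every x > 0, (-1)ⁿ times its n-th derivative at x is strictly positive. -/
/-- The standard normal probability density function. -/
noncomputable def stdNormalPDF (t : ℝ) : ℝ := Real.exp (-t ^ 2 / 2) / Real.sqrt (2 * Real.pi)

/-- The Mills ratio of the standard normal distribution: survival function over density. -/
noncomputable def millsRatio (x : ℝ) : ℝ := (∫ t in Set.Ioi x, stdNormalPDF t) / stdNormalPDF x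

open Real MeasureTheory Set Filter

noncomputable def mw (u : ℝ) : ℝ := (Real.sqrt Real.pi * Real.sqrt u * (2 * u + 1))⁻¹

lemma mw_pos {u : ℝ} (hu : 0 < u) : 0 < mw u := by
  have h := Real.pi_pos
  have h1 : 0 < Real.sqrt Real.pi := Real.sqrt_pos.mpr h
  have h2 : 0 < Real.sqrt u := Real.sqrt_pos.mpr hu
  unfold mw; positivity

lemma mw_contOn : ContinuousOn mw (Set.Ioi 0) := by
  apply ContinuousOn.inv₀
  · exact ((continuous_const.mul Real.continuous_sqrt).mul (by continuity)).continuousOn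
  · intro u hu
    have h1 : 0 < Real.sqrt Real.pi := Real.sqrt_pos.mpr Real.pi_pos
    have h2 : 0 < Real.sqrt u := Real.sqrt_pos.mpr hu
    have : (0:ℝ) < u := hu
    positivity

lemma integrableOn_rpow_exp {a x : ℝ} (ha : 0 < a) (hx : 0 < x) :
    IntegrableOn (fun u : ℝ => u ^ (a - 1) * Real.exp (-(x * u))) (Set.Ioi 0) := by
  have h0 : IntegrableOn (fun s : ℝ => Real.exp (-s) * s ^ (a - 1)) (Set.Ioi 0) :=
    Real.GammaIntegral_convergent ha
  have h1 : IntegrableOn (fun t : ℝ => Real.exp (-(x * t)) * (x * t) ^ (a - 1)) (Set.Ioi 0) := by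
    have := (MeasureTheory.integrableOn_Ioi_comp_mul_left_iff
      (fun s : ℝ => Real.exp (-s) * s ^ (a - 1)) 0 hx).2
    simpa using this (by simpa using h0)
  have h2 := h1.const_mul ((x : ℝ) ^ (a - 1))⁻¹
  have hxne : (x : ℝ) ^ (a - 1) ≠ 0 := (Real.rpow_pos_of_pos hx _).ne'
  refine (show IntegrableOn _ _ _ from h2).congr_fun (fun t ht => ?_) measurableSet_Ioi
  dsimp only
  rw [Real.mul_rpow hx.le (le_of_lt ht)]
  field_simp

lemma contOn_integrand (n : ℕ) (x : ℝ) :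
    ContinuousOn (fun u : ℝ => u ^ n * Real.exp (-(x * u)) * mw u) (Set.Ioi 0) := by
  exact (((continuous_pow n).mul (by continuity)).continuousOn).mul mw_contOn

lemma integrableOn_pow_exp_mw (n : ℕ) {x : ℝ} (hx : 0 < x) :
    IntegrableOn (fun u : ℝ => u ^ n * Real.exp (-(x * u)) * mw u) (Set.Ioi 0) := by
  have hd := integrableOn_rpow_exp (a := (n : ℝ) + 1/2) (by positivity) hx
  have hbig : IntegrableOn
      (fun u : ℝ => (Real.sqrt Real.pi)⁻¹ * (u ^ ((n : ℝ) + 1/2 - 1) * Real.exp (-(x * u))))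
      (Set.Ioi 0) := hd.const_mul _
  refine MeasureTheory.Integrable.mono hbig ((contOn_integrand n x).aestronglyMeasurable measurableSet_Ioi) ?_
  refine (MeasureTheory.ae_restrict_iff' measurableSet_Ioi).2 (Filter.Eventually.of_forall ?_)
  intro u hu
  have hu' : (0:ℝ) < u := hu
  have h1 : 0 < Real.sqrt Real.pi := Real.sqrt_pos.mpr Real.pi_pos
  have h2 : 0 < Real.sqrt u := Real.sqrt_pos.mpr hu'
  have hmw : mw u ≤ (Real.sqrt Real.pi * Real.sqrt u)⁻¹ := by
    unfold mw
    rw [inv_le_inv₀ (by positivity) (by positivity)]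
    nlinarith [mul_pos h1 h2]
  have hrw : u ^ ((n : ℝ) + 1/2 - 1) = u ^ n / Real.sqrt u := by
    rw [Real.sqrt_eq_rpow, ← Real.rpow_natCast u n, ← Real.rpow_sub hu']
    congr 1; ring
  have hmw0 : 0 ≤ mw u := (mw_pos hu').le
  rw [Real.norm_eq_abs, Real.norm_eq_abs,
    abs_of_nonneg (mul_nonneg (by positivity) hmw0), abs_of_nonneg (by positivity)]
  rw [hrw]
  calc u ^ n * Real.exp (-(x * u)) * mw u
      ≤ u ^ n * Real.exp (-(x * u)) * (Real.sqrt Real.pi * Real.sqrt u)⁻¹ :=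
        mul_le_mul_of_nonneg_left hmw (by positivity)
    _ = (Real.sqrt Real.pi)⁻¹ * (u ^ n / Real.sqrt u * Real.exp (-(x * u))) := by
        field_simp

/-- The `n`-th putative derivative (up to sign) of the Laplace representation. -/
noncomputable def LF (n : ℕ) (x : ℝ) : ℝ :=
  ∫ u in Set.Ioi (0:ℝ), (-u) ^ n * Real.exp (-(x * u)) * mw u

lemma LF_eq_pm (n : ℕ) (x : ℝ) :
    LF n x = (-1 : ℝ) ^ n * ∫ u in Set.Ioi (0:ℝ), u ^ n * Real.exp (-(x * u)) * mw u := by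
  rw [← integral_const_mul]
  refine setIntegral_congr_fun measurableSet_Ioi (fun u hu => ?_)
  rw [neg_pow u n]; ring

lemma integral_pow_exp_mw_pos (n : ℕ) {x : ℝ} (hx : 0 < x) :
    0 < ∫ u in Set.Ioi (0:ℝ), u ^ n * Real.exp (-(x * u)) * mw u := by
  rw [setIntegral_pos_iff_support_of_nonneg_ae]
  · have hsub : Set.Ioi (0:ℝ) ⊆ Function.support (fun u : ℝ => u ^ n * Real.exp (-(x * u)) * mw u) ∩ Set.Ioi 0 := by
      intro u hu
      have hu' : (0:ℝ) < u := hu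
      refine ⟨?_, hu⟩
      have := mw_pos hu'
      exact (by positivity : (0:ℝ) < u ^ n * Real.exp (-(x * u)) * mw u).ne'
    calc (0 : ENNReal) < volume (Set.Ioi (0:ℝ)) := by simp [Real.volume_Ioi]
      _ ≤ _ := measure_mono hsub
  · refine (MeasureTheory.ae_restrict_iff' measurableSet_Ioi).2 (Filter.Eventually.of_forall ?_)
    intro u hu
    have hu' : (0:ℝ) < u := hu
    have := (mw_pos hu').le
    positivity
  · exact integrableOn_pow_exp_mw n hx

lemma LF_sign (n : ℕ) {x : ℝ} (hx : 0 < x) : 0 < (-1 : ℝ) ^ n * LF n x := by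
  rw [LF_eq_pm, ← mul_assoc, ← mul_pow]
  simpa using integral_pow_exp_mw_pos n hx

lemma LF_integrand_meas (n : ℕ) (x : ℝ) :
    AEStronglyMeasurable (fun u : ℝ => (-u) ^ n * Real.exp (-(x * u)) * mw u)
      (volume.restrict (Set.Ioi 0)) := by
  apply ContinuousOn.aestronglyMeasurable _ measurableSet_Ioi
  exact ((((continuous_neg).pow n).mul (by continuity)).continuousOn).mul mw_contOn

lemma LF_integrand_integrable (n : ℕ) {x : ℝ} (hx : 0 < x) :
    Integrable (fun u : ℝ => (-u) ^ n * Real.exp (-(x * u)) * mw u)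
      (volume.restrict (Set.Ioi 0)) := by
  refine (((integrableOn_pow_exp_mw n hx).const_mul ((-1:ℝ)^n)).congr
    (Filter.Eventually.of_forall (fun u => ?_)) : _)
  rw [neg_pow]; ring

lemma LF_hasDerivAt (n : ℕ) {x₀ : ℝ} (hx : 0 < x₀) :
    HasDerivAt (LF n) (LF (n+1) x₀) x₀ := by
  have key := hasDerivAt_integral_of_dominated_loc_of_deriv_le
    (μ := volume.restrict (Set.Ioi 0))
    (F := fun (x : ℝ) (u : ℝ) => (-u) ^ n * Real.exp (-(x * u)) * mw u)
    (F' := fun (x : ℝ) (u : ℝ) => (-u) ^ (n+1) * Real.exp (-(x * u)) * mw u)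
    (x₀ := x₀) (s := Metric.ball x₀ (x₀/2))
    (bound := fun u => u ^ (n+1) * Real.exp (-(x₀/2 * u)) * mw u)
    (Metric.ball_mem_nhds _ (by linarith))
    (Filter.Eventually.of_forall (fun x => LF_integrand_meas n x))
    (LF_integrand_integrable n hx)
    (LF_integrand_meas (n+1) x₀)
    ?_ (integrableOn_pow_exp_mw (n+1) (by linarith)) ?_
  · exact key.2
  · refine (MeasureTheory.ae_restrict_iff' measurableSet_Ioi).2
      (Filter.Eventually.of_forall (fun u hu => fun x hxb => ?_))
    have hu' : (0:ℝ) < u := hu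
    have hxhalf : x₀/2 ≤ x := by
      have := Metric.mem_ball.mp hxb
      rw [Real.dist_eq, abs_sub_lt_iff] at this
      linarith [this.1, this.2]
    have hmw0 : 0 ≤ mw u := (mw_pos hu').le
    rw [Real.norm_eq_abs, abs_mul, abs_mul, abs_pow, abs_neg, abs_of_nonneg hu'.le,
      abs_of_nonneg (Real.exp_pos _).le, abs_of_nonneg hmw0]
    have : Real.exp (-(x * u)) ≤ Real.exp (-(x₀/2 * u)) := by
      apply Real.exp_le_exp.2
      nlinarith
    nlinarith [pow_pos hu' (n+1), Real.exp_pos (-(x₀/2 * u)),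
      mul_le_mul_of_nonneg_left this (pow_pos hu' (n+1)).le]
  · refine Filter.Eventually.of_forall (fun u => fun x _ => ?_)
    have h1 : HasDerivAt (fun x : ℝ => -(x * u)) (-u) x := (hasDerivAt_mul_const u).neg
    have h2 := h1.exp
    have h3 := (h2.const_mul ((-u) ^ n)).mul_const (mw u)
    refine h3.congr_deriv (Eq.symm ?_)
    show (-u) ^ (n+1) * Real.exp (-(x * u)) * mw u = _
    rw [pow_succ]
    ring

lemma gamma_half {x : ℝ} (hx : 0 < x) :
    ∫ u in Set.Ioi (0:ℝ), u ^ ((1:ℝ)/2 - 1) * Real.exp (-(x * u))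
      = Real.sqrt Real.pi / Real.sqrt x := by
  rw [Real.integral_rpow_mul_exp_neg_mul_Ioi (by norm_num) hx, Real.Gamma_one_half_eq]
  rw [one_div, ← Real.sqrt_eq_rpow, Real.sqrt_inv]
  field_simp

lemma LF1_eq {x : ℝ} (hx : 0 < x) :
    LF 1 x = LF 0 x / 2 - 1 / (2 * Real.sqrt x) := by
  have h0 := LF_integrand_integrable 0 hx
  have h1 := LF_integrand_integrable 1 hx
  have key : LF 0 x / 2 - LF 1 x = 1 / (2 * Real.sqrt x) := by
    have e1 : LF 0 x / 2 - LF 1 x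
        = ∫ u in Set.Ioi (0:ℝ),
            ((1/2) * ((-u) ^ 0 * Real.exp (-(x * u)) * mw u)
              - (-u) ^ 1 * Real.exp (-(x * u)) * mw u) := by
      rw [MeasureTheory.integral_sub (h0.const_mul (1/2)) h1, MeasureTheory.integral_const_mul]
      unfold LF; ring
    rw [e1]
    have e2 : ∀ u ∈ Set.Ioi (0:ℝ),
        (1/2) * ((-u) ^ 0 * Real.exp (-(x * u)) * mw u)
          - (-u) ^ 1 * Real.exp (-(x * u)) * mw u
        = (1 / (2 * Real.sqrt Real.pi)) * (u ^ ((1:ℝ)/2 - 1) * Real.exp (-(x * u))) := by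
      intro u hu
      have hu' : (0:ℝ) < u := hu
      have h1p : 0 < Real.sqrt Real.pi := Real.sqrt_pos.mpr Real.pi_pos
      have h2s : 0 < Real.sqrt u := Real.sqrt_pos.mpr hu'
      have hss : Real.sqrt u * Real.sqrt u = u := Real.mul_self_sqrt hu'.le
      have hrw : u ^ ((1:ℝ)/2 - 1) = (Real.sqrt u)⁻¹ := by
        rw [show (1:ℝ)/2 - 1 = -(1/2) by norm_num, Real.rpow_neg hu'.le, Real.sqrt_eq_rpow]
      rw [hrw]
      unfold mw
      field_simp
      nlinarith [hss, Real.exp_pos (-(x*u)), h1p, h2s]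
    rw [setIntegral_congr_fun measurableSet_Ioi e2, MeasureTheory.integral_const_mul,
      gamma_half hx]
    rw [div_mul_div_comm, one_mul]
    rw [show 2 * Real.sqrt Real.pi * Real.sqrt x = Real.sqrt Real.pi * (2 * Real.sqrt x) by ring]
    rw [div_eq_div_iff]
    · ring
    · positivity
    · have h2s : 0 < Real.sqrt x := Real.sqrt_pos.mpr hx
      positivity
  linarith

lemma LF_iteratedDeriv (k : ℕ) : ∀ (n : ℕ) {x : ℝ}, 0 < x →
    iteratedDeriv k (LF n) x = LF (n + k) x := by
  induction k with
  | zero => intro n x hx; simp [iteratedDeriv_zero]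
  | succ k ih =>
    intro n x hx
    rw [iteratedDeriv_succ']
    have hev : deriv (LF n) =ᶠ[nhds x] LF (n+1) := by
      filter_upwards [IsOpen.mem_nhds isOpen_Ioi hx] with y hy
      exact (LF_hasDerivAt n hy).deriv
    rw [Filter.EventuallyEq.iteratedDeriv_eq k hev, ih (n+1) hx]
    ring_nf


/-- Complexified Laplace transform. -/
noncomputable def GC (z : ℂ) : ℂ := ∫ u in Set.Ioi (0:ℝ), Complex.exp (-(z * u)) * (mw u : ℂ)

lemma GC_integrand_meas (z : ℂ) :
    AEStronglyMeasurable (fun u : ℝ => Complex.exp (-(z * u)) * (mw u : ℂ))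
      (volume.restrict (Set.Ioi 0)) := by
  apply ContinuousOn.aestronglyMeasurable _ measurableSet_Ioi
  refine ContinuousOn.mul ?_ (Complex.continuous_ofReal.comp_continuousOn mw_contOn)
  exact (Complex.continuous_exp.comp (by continuity)).continuousOn

lemma norm_GC_integrand (z : ℂ) (u : ℝ) (hu : 0 < u) :
    ‖Complex.exp (-(z * u)) * (mw u : ℂ)‖ = Real.exp (-(z.re * u)) * mw u := by
  rw [norm_mul, Complex.norm_exp, Complex.norm_real, Real.norm_eq_abs,
    abs_of_nonneg (mw_pos hu).le]
  congr 2
  simp [Complex.mul_re]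

lemma GC_hasDerivAt {z₀ : ℂ} (hz : 0 < z₀.re) :
    HasDerivAt GC (∫ u in Set.Ioi (0:ℝ), -(u:ℂ) * Complex.exp (-(z₀ * u)) * (mw u : ℂ)) z₀ := by
  have hmeas' : AEStronglyMeasurable
      (fun u : ℝ => -(u:ℂ) * Complex.exp (-(z₀ * u)) * (mw u : ℂ))
      (volume.restrict (Set.Ioi 0)) := by
    apply ContinuousOn.aestronglyMeasurable _ measurableSet_Ioi
    refine ContinuousOn.mul (ContinuousOn.mul ?_ ?_)
      (Complex.continuous_ofReal.comp_continuousOn mw_contOn)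
    · exact (Complex.continuous_ofReal.neg).continuousOn
    · exact (Complex.continuous_exp.comp (by continuity)).continuousOn
  have key := hasDerivAt_integral_of_dominated_loc_of_deriv_le
    (μ := volume.restrict (Set.Ioi 0))
    (F := fun (z : ℂ) (u : ℝ) => Complex.exp (-(z * u)) * (mw u : ℂ))
    (F' := fun (z : ℂ) (u : ℝ) => -(u:ℂ) * Complex.exp (-(z * u)) * (mw u : ℂ))
    (x₀ := z₀) (s := Metric.ball z₀ (z₀.re/2))
    (bound := fun u => u ^ 1 * Real.exp (-(z₀.re/2 * u)) * mw u)
    (Metric.ball_mem_nhds _ (by linarith))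
    (Filter.Eventually.of_forall (fun z => GC_integrand_meas z))
    ?_ hmeas' ?_ (integrableOn_pow_exp_mw 1 (by linarith)) ?_
  · exact key.2
  · -- integrability of F z₀
    refine MeasureTheory.Integrable.mono' (integrableOn_pow_exp_mw 0 hz)
      (GC_integrand_meas z₀) ?_
    refine (MeasureTheory.ae_restrict_iff' measurableSet_Ioi).2
      (Filter.Eventually.of_forall (fun u hu => ?_))
    have hu' : (0:ℝ) < u := hu
    rw [norm_GC_integrand z₀ u hu', pow_zero, one_mul]
  · -- bound
    refine (MeasureTheory.ae_restrict_iff' measurableSet_Ioi).2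
      (Filter.Eventually.of_forall (fun u hu z hzb => ?_))
    have hu' : (0:ℝ) < u := hu
    have hre : z₀.re/2 ≤ z.re := by
      have h1 : |(z - z₀).re| ≤ ‖z - z₀‖ := Complex.abs_re_le_norm _
      have h2 : ‖z - z₀‖ < z₀.re/2 := by
        rw [← dist_eq_norm]; exact Metric.mem_ball.mp hzb
      have := abs_le.mp (le_of_lt (lt_of_le_of_lt h1 h2))
      have h3 : (z - z₀).re = z.re - z₀.re := by simp [Complex.sub_re]
      rw [h3] at this
      linarith [this.1]
    rw [norm_mul, norm_mul, Complex.norm_exp]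
    have e1 : ‖-(u:ℂ)‖ = u := by
      rw [norm_neg, Complex.norm_real, Real.norm_eq_abs, abs_of_nonneg hu'.le]
    have e2 : ‖((mw u : ℝ) : ℂ)‖ = mw u := by
      rw [Complex.norm_real, Real.norm_eq_abs, abs_of_nonneg (mw_pos hu').le]
    rw [e1, e2]
    have hrez : (-(z * u)).re = -(z.re * u) := by simp [Complex.mul_re]
    rw [hrez]
    show _ ≤ u ^ 1 * Real.exp (-(z₀.re/2 * u)) * mw u
    rw [pow_one]
    have hee : Real.exp (-(z.re * u)) ≤ Real.exp (-(z₀.re/2 * u)) := by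
      apply Real.exp_le_exp.2; nlinarith
    nlinarith [mw_pos hu', Real.exp_pos (-(z.re * u)), Real.exp_pos (-(z₀.re/2 * u)),
      mul_le_mul_of_nonneg_left hee hu'.le]
  · -- differentiability
    refine Filter.Eventually.of_forall (fun u z _ => ?_)
    have h1 : HasDerivAt (fun z : ℂ => -(z * u)) (-(u:ℂ)) z := by
      exact (hasDerivAt_mul_const (u:ℂ) (x := z)).neg
    have h3 := (h1.cexp).mul_const ((mw u : ℝ) : ℂ)
    refine h3.congr_deriv (Eq.symm ?_)
    ring

lemma GC_ofReal {x : ℝ} (hx : 0 < x) : GC (x : ℂ) = ((LF 0 x : ℝ) : ℂ) := by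
  unfold GC LF
  rw [show ((((∫ u in Set.Ioi (0:ℝ), (-u) ^ 0 * Real.exp (-(x * u)) * mw u) : ℝ)) : ℂ)
      = ∫ u in Set.Ioi (0:ℝ), (((-u) ^ 0 * Real.exp (-(x * u)) * mw u : ℝ) : ℂ)
    from (integral_ofReal).symm]
  refine setIntegral_congr_fun measurableSet_Ioi (fun u hu => ?_)
  push_cast
  ring

lemma LF0_analyticOnNhd : AnalyticOnNhd ℝ (LF 0) (Set.Ioi 0) := by
  have hopen : IsOpen {z : ℂ | 0 < z.re} := isOpen_lt continuous_const Complex.continuous_re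
  have hGC : AnalyticOnNhd ℂ GC {z : ℂ | 0 < z.re} := by
    apply DifferentiableOn.analyticOnNhd _ hopen
    exact fun z hz => ((GC_hasDerivAt hz).differentiableAt).differentiableWithinAt
  have h1 : AnalyticOnNhd ℝ (fun x : ℝ => Complex.reCLM (GC (Complex.ofRealCLM x)))
      (Set.Ioi 0) := by
    intro x hx
    have hx' : (0:ℝ) < x := hx
    have ha1 : AnalyticAt ℝ (Complex.ofRealCLM : ℝ → ℂ) x := Complex.ofRealCLM.analyticAt x
    have ha2 : AnalyticAt ℝ GC ((x : ℂ)) := (hGC (x:ℂ) (by simpa using hx')).restrictScalars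
    have ha3 : AnalyticAt ℝ (Complex.reCLM : ℂ → ℝ) (GC (x:ℂ)) :=
      Complex.reCLM.analyticAt _
    exact (ha3.comp ha2).comp ha1
  refine AnalyticOnNhd.congr isOpen_Ioi h1 (fun x hx => ?_)
  have hx' : (0:ℝ) < x := hx
  simp only [Complex.ofRealCLM_apply, GC_ofReal hx', Complex.reCLM_apply, Complex.ofReal_re]

lemma pdf_eq (t : ℝ) : stdNormalPDF t = Real.exp (-(1/2) * t ^ 2) / Real.sqrt (2 * Real.pi) := by
  unfold stdNormalPDF
  congr 1
  ring_nf

lemma pdf_pos (t : ℝ) : 0 < stdNormalPDF t := by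
  unfold stdNormalPDF
  have h : 0 < Real.sqrt (2 * Real.pi) := Real.sqrt_pos.mpr (by positivity)
  positivity

lemma pdf_cont : Continuous stdNormalPDF := by
  unfold stdNormalPDF
  exact (Real.continuous_exp.comp (by continuity)).div_const _

lemma pdf_integrable : Integrable stdNormalPDF := by
  have h := (integrable_exp_neg_mul_sq (by norm_num : (0:ℝ) < 1/2)).div_const
    (Real.sqrt (2 * Real.pi))
  refine h.congr (Filter.Eventually.of_forall (fun t => ?_))
  rw [pdf_eq]

lemma pdf_hasDerivAt (a : ℝ) : HasDerivAt stdNormalPDF (-a * stdNormalPDF a) a := by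
  have h1 : HasDerivAt (fun t : ℝ => -t ^ 2 / 2) (-(2 * a ^ 1) / 2) a :=
    ((hasDerivAt_pow 2 a).neg).div_const 2
  have h2 := (h1.exp).div_const (Real.sqrt (2 * Real.pi))
  refine h2.congr_deriv (Eq.symm ?_)
  unfold stdNormalPDF
  field_simp

lemma pdf_tendsto_zero : Tendsto stdNormalPDF atTop (nhds 0) := by
  have h1 : Tendsto (fun t : ℝ => -t ^ 2 / 2) atTop atBot := by
    apply Filter.Tendsto.atBot_div_const (by norm_num)
    exact tendsto_neg_atBot_iff.mpr (tendsto_pow_atTop (by norm_num))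
  have h2 := Real.tendsto_exp_atBot.comp h1
  have h3 := h2.div_const (Real.sqrt (2 * Real.pi))
  rw [zero_div] at h3
  exact h3

noncomputable def SNS (x : ℝ) : ℝ := ∫ t in Set.Ioi x, stdNormalPDF t

lemma SNS_eq (x : ℝ) : SNS x = SNS 0 - ∫ t in (0:ℝ)..x, stdNormalPDF t := by
  rcases le_total 0 x with hx | hx
  · rw [intervalIntegral.integral_of_le hx]
    have hu : Set.Ioc 0 x ∪ Set.Ioi x = Set.Ioi (0:ℝ) := Set.Ioc_union_Ioi_eq_Ioi hx
    have hdisj : Disjoint (Set.Ioc 0 x) (Set.Ioi x) := Set.Ioc_disjoint_Ioi le_rfl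
    have := MeasureTheory.setIntegral_union hdisj measurableSet_Ioi
      (pdf_integrable.integrableOn) (pdf_integrable.integrableOn)
    unfold SNS
    rw [← hu, this]
    ring
  · rw [intervalIntegral.integral_of_ge hx]
    have hu : Set.Ioc x 0 ∪ Set.Ioi 0 = Set.Ioi x := Set.Ioc_union_Ioi_eq_Ioi hx
    have hdisj : Disjoint (Set.Ioc x 0) (Set.Ioi 0) := Set.Ioc_disjoint_Ioi le_rfl
    have := MeasureTheory.setIntegral_union hdisj measurableSet_Ioi
      (pdf_integrable.integrableOn) (pdf_integrable.integrableOn)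
    unfold SNS
    rw [← hu, this]
    ring

lemma SNS_hasDerivAt (x : ℝ) : HasDerivAt SNS (-stdNormalPDF x) x := by
  have hftc : HasDerivAt (fun u : ℝ => ∫ t in (0:ℝ)..u, stdNormalPDF t) (stdNormalPDF x) x :=
    intervalIntegral.integral_hasDerivAt_right (pdf_integrable.intervalIntegrable)
      (pdf_cont.stronglyMeasurableAtFilter _ _) pdf_cont.continuousAt
  have h2 := (hftc.const_sub (SNS 0))
  exact h2.congr_of_eventuallyEq (Filter.Eventually.of_forall (fun y => SNS_eq y))

lemma mills_hasDerivAt (a : ℝ) : HasDerivAt millsRatio (a * millsRatio a - 1) a := by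
  have hS := SNS_hasDerivAt a
  have hφ := pdf_hasDerivAt a
  have h := hS.div hφ (pdf_pos a).ne'
  have hmr : millsRatio = fun x => SNS x / stdNormalPDF x := rfl
  rw [hmr]
  refine h.congr_deriv (Eq.symm ?_)
  show a * (SNS a / stdNormalPDF a) - 1 = _
  have hp := (pdf_pos a).ne'
  field_simp
  ring

lemma g_hasDerivAt {y : ℝ} (hy : 0 < y) :
    HasDerivAt (fun y : ℝ => millsRatio (Real.sqrt y))
      (millsRatio (Real.sqrt y) / 2 - 1 / (2 * Real.sqrt y)) y := by
  have hs := Real.hasDerivAt_sqrt hy.ne'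
  have hm := mills_hasDerivAt (Real.sqrt y)
  have h := hm.comp y hs
  refine h.congr_deriv (Eq.symm ?_)
  have hsy : Real.sqrt y ≠ 0 := (Real.sqrt_pos.mpr hy).ne'
  have hyy : Real.sqrt y * Real.sqrt y = y := Real.mul_self_sqrt hy.le
  field_simp

lemma integral_mul_pdf_Ioi {a : ℝ} (ha : 0 < a) :
    IntegrableOn (fun t : ℝ => t * stdNormalPDF t) (Set.Ioi a) ∧
    (∫ t in Set.Ioi a, t * stdNormalPDF t) = stdNormalPDF a := by
  have hderiv : ∀ x ∈ Set.Ici a, HasDerivAt (fun t : ℝ => -stdNormalPDF t)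
      (x * stdNormalPDF x) x := by
    intro x _
    have := (pdf_hasDerivAt x).neg
    refine this.congr_deriv (Eq.symm ?_)
    ring
  have hlim : Tendsto (fun t : ℝ => -stdNormalPDF t) atTop (nhds 0) := by
    have := pdf_tendsto_zero.neg
    rwa [neg_zero] at this
  have hnonneg : ∀ x ∈ Set.Ioi a, 0 ≤ x * stdNormalPDF x := fun x hx =>
    mul_nonneg (le_of_lt (lt_trans ha hx)) (pdf_pos x).le
  have hint := integrableOn_Ioi_deriv_of_nonneg' hderiv hnonneg hlim
  refine ⟨hint, ?_⟩
  have := integral_Ioi_of_hasDerivAt_of_tendsto' hderiv hint hlim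
  rw [this]
  ring

lemma SNS_pos (a : ℝ) : 0 < SNS a := by
  unfold SNS
  rw [setIntegral_pos_iff_support_of_nonneg_ae]
  · have : Function.support stdNormalPDF ∩ Set.Ioi a = Set.Ioi a := by
      apply Set.inter_eq_right.mpr
      intro t _
      exact (pdf_pos t).ne'
    rw [this]
    simp [Real.volume_Ioi]
  · exact Filter.Eventually.of_forall (fun t => (pdf_pos t).le)
  · exact pdf_integrable.integrableOn

lemma mills_pos (a : ℝ) : 0 < millsRatio a :=
  div_pos (SNS_pos a) (pdf_pos a)

lemma mills_le {a : ℝ} (ha : 0 < a) : millsRatio a ≤ 1 / a := by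
  obtain ⟨hint, hval⟩ := integral_mul_pdf_Ioi ha
  have hmono : SNS a ≤ (1/a) * stdNormalPDF a := by
    have h1 : SNS a ≤ ∫ t in Set.Ioi a, (1/a) * (t * stdNormalPDF t) := by
      refine setIntegral_mono_on pdf_integrable.integrableOn (hint.const_mul _)
        measurableSet_Ioi (fun t ht => ?_)
      have hta : a < t := ht
      rw [one_div, ← mul_assoc]
      nth_rewrite 1 [← one_mul (stdNormalPDF t)]
      apply mul_le_mul_of_nonneg_right _ (pdf_pos t).le
      rw [inv_mul_eq_div, le_div_iff₀ ha]
      linarith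
    rwa [MeasureTheory.integral_const_mul, hval] at h1
  unfold millsRatio
  rw [div_le_div_iff₀ (pdf_pos a) ha] at *
  have := SNS_pos a
  calc SNS a * a ≤ (1/a) * stdNormalPDF a * a := by nlinarith
    _ = 1 * stdNormalPDF a := by field_simp

lemma LF0_pos {x : ℝ} (hx : 0 < x) : 0 < LF 0 x := by
  simpa using LF_sign 0 hx

lemma LF0_le {x : ℝ} (hx : 0 < x) : LF 0 x ≤ 1 / Real.sqrt x := by
  have hred : LF 0 x ≤ ∫ u in Set.Ioi (0:ℝ),
      (Real.sqrt Real.pi)⁻¹ * (u ^ ((1:ℝ)/2 - 1) * Real.exp (-(x * u))) := by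
    refine setIntegral_mono_on (LF_integrand_integrable 0 hx)
      ((integrableOn_rpow_exp (by norm_num) hx).const_mul _) measurableSet_Ioi
      (fun u hu => ?_)
    have hu' : (0:ℝ) < u := hu
    have h1p : 0 < Real.sqrt Real.pi := Real.sqrt_pos.mpr Real.pi_pos
    have h2s : 0 < Real.sqrt u := Real.sqrt_pos.mpr hu'
    have hrw : u ^ ((1:ℝ)/2 - 1) = (Real.sqrt u)⁻¹ := by
      rw [show (1:ℝ)/2 - 1 = -(1/2) by norm_num, Real.rpow_neg hu'.le, Real.sqrt_eq_rpow]
    rw [hrw, pow_zero, one_mul]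
    have hmw : mw u ≤ (Real.sqrt Real.pi * Real.sqrt u)⁻¹ := by
      unfold mw
      rw [inv_le_inv₀ (by positivity) (by positivity)]
      nlinarith [mul_pos h1p h2s]
    calc Real.exp (-(x * u)) * mw u
        ≤ Real.exp (-(x * u)) * (Real.sqrt Real.pi * Real.sqrt u)⁻¹ :=
          mul_le_mul_of_nonneg_left hmw (Real.exp_pos _).le
      _ = (Real.sqrt Real.pi)⁻¹ * ((Real.sqrt u)⁻¹ * Real.exp (-(x * u))) := by
          rw [mul_inv]; ring
  rw [MeasureTheory.integral_const_mul, gamma_half hx] at hred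
  have h1p : 0 < Real.sqrt Real.pi := Real.sqrt_pos.mpr Real.pi_pos
  calc LF 0 x ≤ (Real.sqrt Real.pi)⁻¹ * (Real.sqrt Real.pi / Real.sqrt x) := hred
    _ = 1 / Real.sqrt x := by field_simp

noncomputable def DD (x : ℝ) : ℝ := (millsRatio (Real.sqrt x) - LF 0 x) * Real.exp (-x/2)

lemma DD_hasDerivAt {x : ℝ} (hx : 0 < x) : HasDerivAt DD 0 x := by
  have hg := g_hasDerivAt hx
  have hF := LF_hasDerivAt 0 hx
  rw [LF1_eq hx] at hF
  have hsub := hg.sub hF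
  have h1 : HasDerivAt (fun x : ℝ => -x/2) (-1/2) x := (hasDerivAt_id x).neg.div_const 2
  have hexp := h1.exp
  have hfin := hsub.mul hexp
  unfold DD
  refine hfin.congr_deriv (Eq.symm ?_)
  simp only [Pi.sub_apply]
  ring

lemma DD_const {a b : ℝ} (ha : 0 < a) (hab : a ≤ b) : DD b = DD a := by
  have hcont : ContinuousOn DD (Set.Icc a b) := fun x hx =>
    ((DD_hasDerivAt (lt_of_lt_of_le ha hx.1)).continuousAt).continuousWithinAt
  have hderiv : ∀ x ∈ Set.Ico a b, HasDerivWithinAt DD 0 (Set.Ici x) x := fun x hx =>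
    ((DD_hasDerivAt (lt_of_lt_of_le ha hx.1)).hasDerivWithinAt)
  exact constant_of_has_deriv_right_zero hcont hderiv b (Set.right_mem_Icc.mpr hab)

lemma DD_tendsto : Tendsto DD atTop (nhds 0) := by
  have hsq : Tendsto (fun x : ℝ => Real.sqrt x) atTop atTop := by
    have h := tendsto_rpow_atTop (by norm_num : (0:ℝ) < 1/2)
    refine h.congr' ?_
    filter_upwards [eventually_ge_atTop (0:ℝ)] with x hx
    rw [Real.sqrt_eq_rpow]
  have hlim : Tendsto (fun x : ℝ => 1 / Real.sqrt x) atTop (nhds 0) := by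
    simpa [one_div, Pi.inv_def] using hsq.inv_tendsto_atTop
  apply squeeze_zero_norm' _ hlim
  filter_upwards [eventually_gt_atTop (0:ℝ)] with x hx
  have hsx : 0 < Real.sqrt x := Real.sqrt_pos.mpr hx
  have h1 : millsRatio (Real.sqrt x) ≤ 1 / Real.sqrt x := mills_le hsx
  have h2 : 0 < millsRatio (Real.sqrt x) := mills_pos _
  have h3 : 0 < LF 0 x := LF0_pos hx
  have h4 : LF 0 x ≤ 1 / Real.sqrt x := LF0_le hx
  have hexp1 : Real.exp (-x/2) ≤ 1 := Real.exp_le_one_iff.mpr (by linarith)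
  have hexp0 : 0 < Real.exp (-x/2) := Real.exp_pos _
  unfold DD
  rw [Real.norm_eq_abs, abs_mul, abs_of_nonneg hexp0.le]
  have habs : |millsRatio (Real.sqrt x) - LF 0 x| ≤ 1 / Real.sqrt x := by
    rw [abs_sub_le_iff]
    constructor <;> linarith
  calc |millsRatio (Real.sqrt x) - LF 0 x| * Real.exp (-x/2)
      ≤ (1 / Real.sqrt x) * 1 := by
        apply mul_le_mul habs hexp1 hexp0.le (by positivity)
    _ = 1 / Real.sqrt x := by ring

lemma mills_eq_LF0 {x : ℝ} (hx : 0 < x) : millsRatio (Real.sqrt x) = LF 0 x := by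
  have h0 : DD x = 0 := by
    have hconst : ∀ᶠ b in atTop, DD b = DD x :=
      (eventually_ge_atTop x).mono (fun b hb => DD_const hx hb)
    have h2 : Tendsto (fun _ : ℝ => DD x) atTop (nhds 0) := DD_tendsto.congr' hconst
    exact (tendsto_nhds_unique tendsto_const_nhds h2)
  have hexp : Real.exp (-x/2) ≠ 0 := (Real.exp_pos _).ne'
  unfold DD at h0
  rcases mul_eq_zero.mp h0 with h | h
  · exact sub_eq_zero.mp h
  · exact absurd h hexp

/-- The function `x ↦ m(√x)`, where `m` is the Mills ratio of the standard normal law,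
is strictly completely monotonic on `(0,∞)`: it has derivatives of all orders there and
`(-1)ⁿ` times its `n`-th derivative is strictly positive for every `n ≥ 0` and `x > 0`. -/
theorem millsRatio_sqrt_strictly_completely_monotonic :
    ContDiffOn ℝ (⊤ : ℕ∞) (fun y : ℝ => millsRatio (Real.sqrt y)) (Set.Ioi 0) ∧
      ∀ (n : ℕ) (x : ℝ), 0 < x →
        0 < (-1 : ℝ) ^ n * iteratedDeriv n (fun y : ℝ => millsRatio (Real.sqrt y)) x := by
  have hEq : Set.EqOn (fun y : ℝ => millsRatio (Real.sqrt y)) (LF 0) (Set.Ioi 0) :=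
    fun x hx => mills_eq_LF0 hx
  constructor
  · exact (LF0_analyticOnNhd.congr isOpen_Ioi hEq.symm).contDiffOn (uniqueDiffOn_Ioi 0)
  · intro n x hx
    have h1 : iteratedDeriv n (fun y : ℝ => millsRatio (Real.sqrt y)) x
        = iteratedDeriv n (LF 0) x := by
      apply Filter.EventuallyEq.iteratedDeriv_eq
      filter_upwards [IsOpen.mem_nhds isOpen_Ioi hx] with y hy using hEq hy
    rw [h1, LF_iteratedDeriv n 0 hx, show 0 + n = n from Nat.zero_add n]
    exact LF_sign n hx
end

section
/- The function g : (0,∞) → ℝ defined by g(x) = m(√x)/√x, where m is the Mills ratio of the standard normal law, is strictly reciprocally concave on (0,∞): g is strictly convex on (0,∞) and x ↦ g(1/x) is strictly concave on (0,∞). -/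
/-!
Substituting `t = √(x + s)` in the Gaussian tail integral gives
`m(√x)/√x = ∫₀^∞ (e^{-s/2}/2) kₛ(x) ds` with `kₛ(x) = x^{-1/2} (x + s)^{-1/2}`, and a positive
mixture of strictly reciprocally concave functions is strictly reciprocally concave. Each `kₛ` is
strictly convex as a product of positive, decreasing, convex functions, one of them strictly
convex. For the reciprocal side put `u = √(1 + s x)`, a concave function of `x`: then
`kₛ(1/x) = x/u = (u - u⁻¹)/s`, and `u⁻¹` is strictly convex.
-/

open MeasureTheory Real Set

section Convexity

variable {E : Type*} [AddCommGroup E] [Module ℝ E] {C : Set E} {f g : E → ℝ}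

theorem StrictConvexOn.const_mul (hf : StrictConvexOn ℝ C f) {c : ℝ} (hc : 0 < c) :
    StrictConvexOn ℝ C fun x => c * f x :=
  ⟨hf.1, fun x hx y hy hxy a b ha hb hab => by
    simpa only [smul_eq_mul, mul_add, mul_left_comm c] using
      mul_lt_mul_of_pos_left (hf.2 hx hy hxy ha hb hab) hc⟩

theorem StrictConcaveOn.const_mul (hf : StrictConcaveOn ℝ C f) {c : ℝ} (hc : 0 < c) :
    StrictConcaveOn ℝ C fun x => c * f x :=
  ⟨hf.1, fun x hx y hy hxy a b ha hb hab => by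
    simpa only [smul_eq_mul, mul_add, mul_left_comm c] using
      mul_lt_mul_of_pos_left (hf.2 hx hy hxy ha hb hab) hc⟩

theorem ConcaveOn.sqrt (hf : ConcaveOn ℝ C f) (hf₀ : ∀ x ∈ C, 0 ≤ f x) :
    ConcaveOn ℝ C fun x => √(f x) :=
  ⟨hf.1, fun x hx y hy _ _ ha hb hab =>
    (strictConcaveOn_sqrt.concaveOn.2 (hf₀ x hx) (hf₀ y hy) ha hb hab).trans
      (Real.sqrt_le_sqrt (hf.2 hx hy ha hb hab))⟩

theorem ConcaveOn.strictConvexOn_inv_sqrt (hf : ConcaveOn ℝ C f) (hf₀ : ∀ x ∈ C, 0 < f x)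
    (hf' : InjOn f C) : StrictConvexOn ℝ C fun x => (√(f x))⁻¹ := by
  have hinv : StrictConvexOn ℝ (Ioi 0) fun t : ℝ => t⁻¹ := by
    simpa only [zpow_neg_one] using strictConvexOn_zpow (m := -1) (by norm_num) (by norm_num)
  have hsqrt := hf.sqrt fun x hx => (hf₀ x hx).le
  have hpos : ∀ x ∈ C, 0 < √(f x) := fun x hx => Real.sqrt_pos.2 (hf₀ x hx)
  refine ⟨hf.1, fun x hx y hy hxy a b ha hb hab => ?_⟩
  have hne : √(f x) ≠ √(f y) := fun h =>
    hxy (hf' hx hy ((Real.sqrt_inj (hf₀ x hx).le (hf₀ y hy).le).1 h))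
  calc (√(f (a • x + b • y)))⁻¹
      ≤ (a • √(f x) + b • √(f y))⁻¹ :=
        inv_anti₀ (by positivity [hpos x hx, hpos y hy]) (hsqrt.2 hx hy ha.le hb.le hab)
    _ < a • (√(f x))⁻¹ + b • (√(f y))⁻¹ :=
        hinv.2 (hpos x hx) (hpos y hy) hne ha hb hab

theorem StrictConvexOn.mul_convexOn (hf : StrictConvexOn ℝ C f) (hg : ConvexOn ℝ C g)
    (hf₀ : ∀ x ∈ C, 0 ≤ f x) (hg₀ : ∀ x ∈ C, 0 < g x) (hfg : MonovaryOn f g C) :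
    StrictConvexOn ℝ C (f * g) := by
  refine ⟨hf.1, fun x hx y hy hxy a b ha hb hab => ?_⟩
  have hz := hf.1 hx hy ha.le hb.le hab
  have hmix := mul_le_mul_of_nonneg_left (hfg.mul_add_mul_le_mul_add_mul hx hy)
    (mul_nonneg ha.le hb.le)
  simp only [Pi.mul_apply, smul_eq_mul]
  calc f (a • x + b • y) * g (a • x + b • y)
      < (a * f x + b * f y) * g (a • x + b • y) :=
        mul_lt_mul_of_pos_right (hf.2 hx hy hxy ha hb hab) (hg₀ _ hz)
    _ ≤ (a * f x + b * f y) * (a * g x + b * g y) :=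
        mul_le_mul_of_nonneg_left (hg.2 hx hy ha.le hb.le hab)
          (by positivity [hf₀ x hx, hf₀ y hy])
    _ ≤ a * (f x * g x) + b * (f y * g y) := by
        linear_combination hmix + (a * (f x * g x) + b * (f y * g y)) * hab

end Convexity

section Integral

variable {α E : Type*} [MeasurableSpace α] {μ : Measure α} [NeZero μ]

theorem integral_pos_of_ae_pos {f : α → ℝ} (hf : ∀ᵐ a ∂μ, 0 < f a) (hfi : Integrable f μ) :
    0 < ∫ a, f a ∂μ := by
  have hsupp : Function.support f =ᵐ[μ] (univ : Set α) :=
    ae_eq_univ.2 (ae_iff.1 (hf.mono fun _ h => h.ne'))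
  rw [integral_pos_iff_support_of_nonneg_ae (hf.mono fun _ h => h.le) hfi, measure_congr hsupp]
  exact Measure.measure_univ_pos.2 (NeZero.ne μ)

theorem integral_lt_integral_of_ae_lt {f g : α → ℝ} (hf : Integrable f μ) (hg : Integrable g μ)
    (hfg : ∀ᵐ a ∂μ, f a < g a) : ∫ a, f a ∂μ < ∫ a, g a ∂μ := by
  have := integral_pos_of_ae_pos (hfg.mono fun _ h => sub_pos.2 h) (hg.sub hf)
  rwa [integral_sub hg hf, sub_pos] at this

variable [AddCommGroup E] [Module ℝ E] {C : Set E} {f : α → E → ℝ}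

theorem strictConvexOn_integral (hf : ∀ᵐ a ∂μ, StrictConvexOn ℝ C (f a))
    (hfi : ∀ x ∈ C, Integrable (fun a => f a x) μ) :
    StrictConvexOn ℝ C fun x => ∫ a, f a x ∂μ := by
  obtain ⟨a₀, ha₀⟩ := hf.exists
  refine ⟨ha₀.1, fun x hx y hy hxy a b ha hb hab => ?_⟩
  have hfx := (hfi x hx).const_mul a
  have hfy := (hfi y hy).const_mul b
  simp only [smul_eq_mul]
  rw [← integral_const_mul, ← integral_const_mul, ← integral_add hfx hfy]
  exact integral_lt_integral_of_ae_lt (hfi _ (ha₀.1 hx hy ha.le hb.le hab)) (hfx.add hfy)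
    (hf.mono fun _ h => h.2 hx hy hxy ha hb hab)

theorem strictConcaveOn_integral (hf : ∀ᵐ a ∂μ, StrictConcaveOn ℝ C (f a))
    (hfi : ∀ x ∈ C, Integrable (fun a => f a x) μ) :
    StrictConcaveOn ℝ C fun x => ∫ a, f a x ∂μ := by
  have := strictConvexOn_integral (f := fun a x => -f a x) (hf.mono fun _ h => h.neg)
    fun x hx => (hfi x hx).neg
  rw [← neg_strictConvexOn_iff]
  simp only [integral_neg] at this
  exact this

end Integral

theorem image_sqrt_add_Ioi_zero {x : ℝ} (hx : 0 ≤ x) : (fun s => √(x + s)) '' Ioi 0 = Ioi √x := by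
  ext t
  constructor
  · rintro ⟨s, hs, rfl⟩
    exact Real.sqrt_lt_sqrt hx (lt_add_of_pos_right x hs)
  · intro ht
    have ht₀ : 0 < t := (Real.sqrt_nonneg x).trans_lt ht
    refine ⟨t ^ 2 - x, sub_pos.2 ((Real.sqrt_lt' ht₀).1 ht), ?_⟩
    simp [Real.sqrt_sq ht₀.le]

theorem setIntegral_Ioi_sqrt_eq {E : Type*} [NormedAddCommGroup E] [NormedSpace ℝ E]
    (h : ℝ → E) {x : ℝ} (hx : 0 ≤ x) :
    ∫ t in Ioi √x, h t = ∫ s in Ioi 0, (2 * √(x + s))⁻¹ • h √(x + s) := by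
  have hderiv (s : ℝ) (hs : s ∈ Ioi 0) :
      HasDerivWithinAt (fun s => √(x + s)) (2 * √(x + s))⁻¹ (Ioi 0) s := by
    have := ((hasDerivAt_id s).const_add x).sqrt (add_pos_of_nonneg_of_pos hx hs).ne'
    simpa using this.hasDerivWithinAt
  have hinj : InjOn (fun s => √(x + s)) (Ioi 0) := fun s hs r hr h => by
    simpa using (Real.sqrt_inj (add_nonneg hx (le_of_lt hs)) (add_nonneg hx (le_of_lt hr))).1 h
  rw [← image_sqrt_add_Ioi_zero hx,
    integral_image_eq_integral_abs_deriv_smul measurableSet_Ioi hderiv hinj]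
  refine setIntegral_congr_fun measurableSet_Ioi fun s hs => ?_
  rw [abs_of_nonneg (by positivity)]

noncomputable def millsKernel (s x : ℝ) : ℝ := (√x)⁻¹ * (√(x + s))⁻¹

theorem strictConvexOn_millsKernel {s : ℝ} (hs : 0 ≤ s) :
    StrictConvexOn ℝ (Ioi 0) (millsKernel s) := by
  have hpos (c : ℝ) (hc : 0 ≤ c) (x : ℝ) (hx : x ∈ Ioi 0) : 0 < x + c :=
    add_pos_of_pos_of_nonneg hx hc
  have hconv (c : ℝ) (hc : 0 ≤ c) : StrictConvexOn ℝ (Ioi 0) fun x : ℝ => (√(x + c))⁻¹ :=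
    ((concaveOn_id (convex_Ioi 0)).add_const c).strictConvexOn_inv_sqrt (hpos c hc)
      fun x _ y _ h => by simpa using h
  have hanti (c : ℝ) (hc : 0 ≤ c) : AntitoneOn (fun x : ℝ => (√(x + c))⁻¹) (Ioi 0) :=
    fun x hx _ _ hxy => inv_anti₀ (Real.sqrt_pos.2 (hpos c hc x hx))
      (Real.sqrt_le_sqrt (by linarith))
  have key := (hconv 0 le_rfl).mul_convexOn (hconv s hs).convexOn (fun _ _ => by positivity)
    (fun x hx => inv_pos.2 (Real.sqrt_pos.2 (hpos s hs x hx)))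
    ((hanti 0 le_rfl).monovaryOn (hanti s hs))
  simp only [add_zero] at key
  exact key

theorem millsKernel_one_div {s x : ℝ} (hs : 0 < s) (hx : 0 < x) :
    millsKernel s (1 / x) = s⁻¹ * (√(1 + s * x) - (√(1 + s * x))⁻¹) := by
  have hsx : 1 / x + s = (1 + s * x) / x := by field_simp
  rw [millsKernel, hsx, Real.sqrt_div zero_le_one, Real.sqrt_div (by positivity), Real.sqrt_one]
  field_simp
  rw [Real.sq_sqrt hx.le, Real.sq_sqrt (by positivity)]
  ring

theorem strictConcaveOn_millsKernel_one_div {s : ℝ} (hs : 0 < s) :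
    StrictConcaveOn ℝ (Ioi 0) fun x => millsKernel s (1 / x) := by
  have hpos (x : ℝ) (hx : x ∈ Ioi 0) : 0 < 1 + s * x := add_pos one_pos (mul_pos hs hx)
  have haff : ConcaveOn ℝ (Ioi 0) fun x : ℝ => 1 + s * x :=
    (concaveOn_const 1 (convex_Ioi 0)).add ((concaveOn_id (convex_Ioi 0)).smul hs.le)
  have hinj : InjOn (fun x : ℝ => 1 + s * x) (Ioi 0) := fun x _ y _ h => by
    simpa [hs.ne'] using h
  exact (((haff.sqrt fun x hx => (hpos x hx).le).sub_strictConvexOn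
    (haff.strictConvexOn_inv_sqrt hpos hinj)).const_mul (inv_pos.2 hs)).congr
    fun x hx => (millsKernel_one_div hs hx).symm

theorem millsRatio_sqrt_div_sqrt_eq_integral {x : ℝ} (hx : 0 < x) :
    millsRatio √x / √x = ∫ s in Ioi 0, exp (-s / 2) / 2 * millsKernel s x := by
  rw [millsRatio, setIntegral_Ioi_sqrt_eq _ hx.le, div_div, ← integral_div]
  refine setIntegral_congr_fun measurableSet_Ioi fun s hs => ?_
  have hxs : 0 < x + s := add_pos hx hs
  have hexp : exp (-(x + s) / 2) = exp (-x / 2) * exp (-s / 2) := by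
    rw [← Real.exp_add]; ring_nf
  have : 0 < √(x + s) := Real.sqrt_pos.2 hxs
  have : 0 < √x := Real.sqrt_pos.2 hx
  have : 0 < √(2 * π) := Real.sqrt_pos.2 (by positivity)
  simp only [stdNormalPDF, millsKernel, smul_eq_mul, Real.sq_sqrt hxs.le, Real.sq_sqrt hx.le, hexp]
  field_simp

theorem integrableOn_millsKernel {x : ℝ} (hx : 0 < x) :
    IntegrableOn (fun s => exp (-s / 2) / 2 * millsKernel s x) (Ioi 0) := by
  have hbound : IntegrableOn (fun s : ℝ => exp (-(1 / 2) * s) * (2 * x)⁻¹) (Ioi 0) :=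
    (exp_neg_integrableOn_Ioi 0 one_half_pos).mul_const _
  refine hbound.mono' (by unfold millsKernel; fun_prop) ?_
  filter_upwards [ae_restrict_mem measurableSet_Ioi] with s hs
  have hk : millsKernel s x ≤ x⁻¹ :=
    calc millsKernel s x ≤ (√x)⁻¹ * (√x)⁻¹ :=
          mul_le_mul_of_nonneg_left (inv_anti₀ (Real.sqrt_pos.2 hx)
            (Real.sqrt_le_sqrt (le_add_of_nonneg_right (le_of_lt hs)))) (by positivity)
      _ = x⁻¹ := by rw [← mul_inv, Real.mul_self_sqrt hx.le]
  rw [Real.norm_of_nonneg (by unfold millsKernel; positivity)]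
  calc exp (-s / 2) / 2 * millsKernel s x ≤ exp (-s / 2) / 2 * x⁻¹ := by gcongr
    _ = exp (-(1 / 2) * s) * (2 * x)⁻¹ := by ring_nf

/-- The function `g(x) = m(√x)/√x`, where `m` is the Mills ratio of the standard normal law,
is strictly reciprocally concave on `(0,∞)`: `g` is strictly convex on `(0,∞)` and
`x ↦ g(1/x)` is strictly concave on `(0,∞)`. -/
theorem millsRatio_sqrt_div_sqrt_strictly_reciprocally_concave :
    StrictConvexOn ℝ (Set.Ioi 0) (fun x : ℝ => millsRatio (Real.sqrt x) / Real.sqrt x) ∧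
      StrictConcaveOn ℝ (Set.Ioi 0)
        (fun x : ℝ => millsRatio (Real.sqrt (1 / x)) / Real.sqrt (1 / x)) := by
  have : NeZero (volume.restrict (Ioi (0 : ℝ))) := ⟨by simp⟩
  constructor
  · refine (strictConvexOn_integral (f := fun s x => exp (-s / 2) / 2 * millsKernel s x)
      (ae_restrict_of_forall_mem measurableSet_Ioi fun s hs =>
        (strictConvexOn_millsKernel (le_of_lt hs)).const_mul (by positivity))
      fun x hx => integrableOn_millsKernel hx).congr fun x hx => ?_
    exact (millsRatio_sqrt_div_sqrt_eq_integral hx).symm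
  · refine (strictConcaveOn_integral (f := fun s x => exp (-s / 2) / 2 * millsKernel s (1 / x))
      (ae_restrict_of_forall_mem measurableSet_Ioi fun s hs =>
        (strictConcaveOn_millsKernel_one_div hs).const_mul (by positivity))
      fun x hx => integrableOn_millsKernel (one_div_pos.2 hx)).congr fun x hx => ?_
    exact (millsRatio_sqrt_div_sqrt_eq_integral (one_div_pos.2 hx)).symm
end

section
/- Let f : (0,∞) → (0,∞) be a twice differentiable probability density function (∫₀^∞ f(t) dt = 1), with logarithmic derivative ω(x) = f′(x)/f(x), survival function F̄(x) = ∫ₓ^∞ f(t) dt, and Mills ratio m(x) = F̄(x)/f(x). If f(x)/(1 − xω(x)) → 0, x f(x)/(1 − xω(x)) → 0, and f(x)/ω(x) → 0 as x → ∞, the function x ↦ ω′(x)/ω(x)² is strictly increasing on (0,∞), and the function x ↦ (x²ω′(x) − xω(x) + 2)/(xω(x)² − xω′(x) − 2ω(x)) is strictly decreasing on (0,∞), then m is strictly reciprocally concave on (0,∞), i.e., m is strictly convex on (0,∞) and x ↦ m(1/x) is strictly concave on (0,∞). -/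
/-!
Write `F` for the tail integral and `m = F / f`. Then `m' = -1 - ωm` and `m'' = ω + (ω² - ω')m`,
and at `y = 1 / x` the second derivative of `x ↦ m (1 / x)` is `(2 m'(y) + y m''(y)) / x³`.
Both signs come from one comparison principle: a function with negative derivative on `(y, ∞)`
that tends to `0` at `∞` is positive at `y`. With `r = ω' / ω²` increasing, `F + f / ω - r(y) F`
has derivative `f (r(y) - r)`, which gives `m'' > 0`, hence also `ω' < ω²`. With `s = num / den`
the decreasing quotient of the hypothesis (`den > 0` because `ω' < ω²` and `ω < 0`),
`(t + s(y)) f / (1 - tω) - F` has derivative `f (num - s(y) den) / (1 - tω)²`, which gives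
`2m' + ym'' < 0`. Finally `ω < 0` is forced by integrability of `f`: once `ω ≥ 0` at some point,
the monotonicity of `r` keeps `ω ≥ 0` further right, and `f` would be nondecreasing there.
-/

open Set Filter MeasureTheory Topology

lemma pos_of_hasDerivAt_neg_of_tendsto_zero {Q Q' : ℝ → ℝ} {y : ℝ}
    (hQ : ∀ t ∈ Ici y, HasDerivAt Q (Q' t) t) (hQ' : ∀ t ∈ Ioi y, Q' t < 0)
    (hlim : Tendsto Q atTop (𝓝 0)) : 0 < Q y := by
  have hanti : StrictAntiOn Q (Ici y) := by
    refine strictAntiOn_of_hasDerivWithinAt_neg (convex_Ici y)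
      (fun t ht => (hQ t ht).continuousAt.continuousWithinAt)
      (fun t ht => (hQ t (interior_subset ht)).hasDerivWithinAt) ?_
    rwa [interior_Ici]
  have hy1 : y + 1 ∈ Ici y := by simp
  have h_nonneg : 0 ≤ Q (y + 1) := le_of_tendsto hlim <| (eventually_ge_atTop (y + 1)).mono
    fun t ht => hanti.antitoneOn hy1 (hy1.trans ht) ht
  linarith [hanti self_mem_Ici hy1 (lt_add_one y)]

lemma strictConvexOn_of_hasDerivAt2_pos {D : Set ℝ} (hD : Convex ℝ D) (hD' : IsOpen D)
    {f f' f'' : ℝ → ℝ} (hf : ∀ x ∈ D, HasDerivAt f (f' x) x)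
    (hf' : ∀ x ∈ D, HasDerivAt f' (f'' x) x) (hf'' : ∀ x ∈ D, 0 < f'' x) :
    StrictConvexOn ℝ D f := by
  have hmono : StrictMonoOn f' D := strictMonoOn_of_hasDerivWithinAt_pos hD
    (fun x hx => (hf' x hx).continuousAt.continuousWithinAt)
    (fun x hx => (hf' x (interior_subset hx)).hasDerivWithinAt)
    (fun x hx => hf'' x (interior_subset hx))
  refine StrictMonoOn.strictConvexOn_of_deriv hD
    (fun x hx => (hf x hx).continuousAt.continuousWithinAt) ?_
  rw [hD'.interior_eq]
  exact hmono.congr (fun x hx => ((hf x hx).deriv).symm)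

lemma strictConcaveOn_comp_one_div {g g' g'' : ℝ → ℝ}
    (hg : ∀ y ∈ Ioi 0, HasDerivAt g (g' y) y) (hg' : ∀ y ∈ Ioi 0, HasDerivAt g' (g'' y) y)
    (hneg : ∀ y ∈ Ioi 0, 2 * g' y + y * g'' y < 0) :
    StrictConcaveOn ℝ (Ioi 0) (fun x => g (1 / x)) := by
  have hinv : ∀ x ∈ Ioi (0 : ℝ),
      1 / x ∈ Ioi 0 ∧ HasDerivAt (fun u : ℝ => 1 / u) (-(x ^ 2)⁻¹) x := fun x hx =>
    ⟨mem_Ioi.2 (one_div_pos.2 hx), by simpa only [one_div] using hasDerivAt_inv (ne_of_gt hx)⟩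
  rw [← neg_strictConvexOn_iff]
  refine strictConvexOn_of_hasDerivAt2_pos (convex_Ioi 0) isOpen_Ioi
    (f' := fun x => g' (1 / x) / x ^ 2)
    (f'' := fun x => -(2 * g' (1 / x) + 1 / x * g'' (1 / x)) / x ^ 3) (fun x hx => ?_)
    (fun x hx => ?_) (fun x hx => div_pos (neg_pos.2 (hneg _ (hinv x hx).1)) (pow_pos hx 3))
  · obtain ⟨hx', hd⟩ := hinv x hx
    refine ((hg _ hx').comp x hd).neg.congr_deriv ?_
    field_simp
  · obtain ⟨hx', hd⟩ := hinv x hx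
    have hx0 : x ≠ 0 := ne_of_gt hx
    refine (((hg' _ hx').comp x hd).div (hasDerivAt_pow 2 x) (pow_ne_zero 2 hx0)).congr_deriv ?_
    simp only [Function.comp_apply, Nat.cast_ofNat]
    field_simp
    ring

section TailIntegral

variable {f : ℝ → ℝ} {a x : ℝ}

lemma hasDerivAt_integral_Ioi (hf : IntegrableOn f (Ioi a)) (hax : a < x)
    (hfx : ContinuousAt f x) : HasDerivAt (fun u => ∫ t in Ioi u, f t) (-f x) x := by
  have hint : IntervalIntegrable f volume a x :=
    (intervalIntegrable_iff_integrableOn_Ioc_of_le hax.le).2 (hf.mono_set Ioc_subset_Ioi_self)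
  have hmeas : StronglyMeasurableAtFilter f (𝓝 x) :=
    AEStronglyMeasurable.stronglyMeasurableAtFilter_of_mem hf.aestronglyMeasurable
      (Ioi_mem_nhds hax)
  refine ((intervalIntegral.integral_hasDerivAt_right hint hmeas hfx).const_sub
    (∫ t in Ioi a, f t)).congr_of_eventuallyEq ?_
  filter_upwards [Ioi_mem_nhds hax] with u hu
  rw [← intervalIntegral.integral_Ioi_sub_Ioi hf (le_of_lt hu), sub_sub_cancel]

lemma integral_Ioi_pos (hf : IntegrableOn f (Ioi x)) (hpos : ∀ t ∈ Ioi x, 0 < f t) :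
    0 < ∫ t in Ioi x, f t := by
  rw [setIntegral_pos_iff_support_of_nonneg_ae
    ((ae_restrict_iff' measurableSet_Ioi).2 (.of_forall fun t ht => (hpos t ht).le)) hf,
    inter_eq_right.2 fun t ht => Function.mem_support.2 (hpos t ht).ne', Real.volume_Ioi]
  exact ENNReal.zero_lt_top

lemma not_integrableOn_Ioi_of_monotoneOn (hmono : MonotoneOn f (Ici a)) (ha : 0 < f a) :
    ¬ IntegrableOn f (Ioi a) := by
  intro hf
  have hconst : IntegrableOn (fun _ => f a) (Ioi a) := by
    refine Integrable.mono hf aestronglyMeasurable_const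
      ((ae_restrict_iff' measurableSet_Ioi).2 (.of_forall fun t ht => ?_))
    have hle : f a ≤ f t := hmono self_mem_Ici (mem_Ici.2 (le_of_lt ht)) (le_of_lt ht)
    rwa [Real.norm_of_nonneg ha.le, Real.norm_of_nonneg (ha.le.trans hle)]
  rw [integrableOn_const_iff, Real.volume_Ioi] at hconst
  simp [ha.ne'] at hconst

end TailIntegral

section LogDerivSign

variable {ω ω' : ℝ → ℝ} {a : ℝ}

lemma pos_of_eq_zero_of_strictMonoOn_deriv_div_sq (hω : ∀ t ∈ Ici a, HasDerivAt ω (ω' t) t)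
    (hr : StrictMonoOn (fun t => ω' t / ω t ^ 2) (Ici a)) (ha : ω a = 0) :
    ∀ t ∈ Ioi a, 0 < ω t := by
  -- at a zero of `ω` the ratio takes the junk value `0`, so it is positive further right
  have hderiv : ∀ t ∈ Ioi a, 0 < ω' t := by
    intro t ht
    have h := hr self_mem_Ici (mem_Ici.2 (le_of_lt ht)) ht
    simp only [ha, ne_eq, OfNat.ofNat_ne_zero, not_false_eq_true, zero_pow, div_zero] at h
    exact lt_of_not_ge fun h' => (div_nonpos_of_nonpos_of_nonneg h' (sq_nonneg _)).not_gt h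
  have hmono : StrictMonoOn ω (Ici a) := by
    refine strictMonoOn_of_hasDerivWithinAt_pos (convex_Ici a)
      (fun t ht => (hω t ht).continuousAt.continuousWithinAt)
      (fun t ht => (hω t (interior_subset ht)).hasDerivWithinAt) ?_
    rwa [interior_Ici]
  intro t ht
  simpa only [ha] using hmono self_mem_Ici (mem_Ici.2 (le_of_lt ht)) ht

lemma nonneg_of_nonneg_of_strictMonoOn_deriv_div_sq (hω : ∀ t ∈ Ici a, HasDerivAt ω (ω' t) t)
    (hr : StrictMonoOn (fun t => ω' t / ω t ^ 2) (Ici a)) (ha : 0 ≤ ω a) :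
    ∀ t ∈ Ici a, 0 ≤ ω t := by
  intro t ht
  by_contra! hneg
  obtain ⟨z, hz, hz0⟩ : ∃ z ∈ Icc a t, ω z = 0 :=
    intermediate_value_Icc' ht (fun s hs => (hω s hs.1).continuousAt.continuousWithinAt)
      ⟨hneg.le, ha⟩
  have hzt : z < t := lt_of_le_of_ne hz.2 (by rintro rfl; exact hneg.ne hz0)
  have hpos := pos_of_eq_zero_of_strictMonoOn_deriv_div_sq
    (fun s hs => hω s (Ici_subset_Ici.2 hz.1 hs)) (hr.mono (Ici_subset_Ici.2 hz.1)) hz0 t hzt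
  exact hneg.not_gt hpos

lemma neg_of_hasDerivAt_mul_of_integrableOn {f : ℝ → ℝ}
    (hf : ∀ x ∈ Ioi a, HasDerivAt f (ω x * f x) x) (hf_pos : ∀ x ∈ Ioi a, 0 < f x)
    (hω : ∀ x ∈ Ioi a, HasDerivAt ω (ω' x) x)
    (hr : StrictMonoOn (fun x => ω' x / ω x ^ 2) (Ioi a)) (hint : IntegrableOn f (Ioi a)) :
    ∀ x ∈ Ioi a, ω x < 0 := by
  intro x hx
  by_contra! h
  have hsub : Ici x ⊆ Ioi a := Ici_subset_Ioi.2 hx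
  have hω_nonneg := nonneg_of_nonneg_of_strictMonoOn_deriv_div_sq
    (fun t ht => hω t (hsub ht)) (hr.mono hsub) h
  have hmono : MonotoneOn f (Ici x) := by
    refine monotoneOn_of_hasDerivWithinAt_nonneg (convex_Ici x)
      (fun t ht => (hf t (hsub ht)).continuousAt.continuousWithinAt)
      (fun t ht => (hf t (hsub (interior_subset ht))).hasDerivWithinAt) ?_
    rw [interior_Ici]
    intro t ht
    have ht' : t ∈ Ici x := mem_Ici.2 (le_of_lt ht)
    exact mul_nonneg (hω_nonneg t ht') (hf_pos t (hsub ht')).le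
  exact not_integrableOn_Ioi_of_monotoneOn hmono (hf_pos x hx)
    (hint.mono_set (Ioi_subset_Ioi (le_of_lt hx)))

end LogDerivSign

section MillsRatio

variable {f ω ω' F : ℝ → ℝ} {a x : ℝ}

lemma hasDerivAt_millsRatio (hF : HasDerivAt F (-f x) x)
    (hf : HasDerivAt f (ω x * f x) x) (hfx : f x ≠ 0) :
    HasDerivAt (fun t => F t / f t) (-1 - ω x * (F x / f x)) x := by
  refine (hF.div hf hfx).congr_deriv ?_
  field_simp

lemma hasDerivAt_millsRatio_deriv (hF : HasDerivAt F (-f x) x)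
    (hf : HasDerivAt f (ω x * f x) x) (hfx : f x ≠ 0) (hω : HasDerivAt ω (ω' x) x) :
    HasDerivAt (fun t => -1 - ω t * (F t / f t)) (ω x + (ω x ^ 2 - ω' x) * (F x / f x)) x := by
  refine ((hω.mul (hasDerivAt_millsRatio hF hf hfx)).const_sub (-1)).congr_deriv ?_
  ring

lemma millsRatio_deriv2_pos (hF : ∀ x ∈ Ioi a, HasDerivAt F (-f x) x)
    (hF0 : Tendsto F atTop (𝓝 0)) (hf : ∀ x ∈ Ioi a, HasDerivAt f (ω x * f x) x)
    (hf_pos : ∀ x ∈ Ioi a, 0 < f x) (hω : ∀ x ∈ Ioi a, HasDerivAt ω (ω' x) x)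
    (hω0 : ∀ x ∈ Ioi a, ω x ≠ 0) (hlim : Tendsto (fun x => f x / ω x) atTop (𝓝 0))
    (hr : StrictMonoOn (fun x => ω' x / ω x ^ 2) (Ioi a)) {y : ℝ} (hy : a < y) :
    0 < ω y + (ω y ^ 2 - ω' y) * (F y / f y) := by
  set r := ω' y / ω y ^ 2 with hr_def
  have hQ : 0 < F y + f y / ω y - r * F y := by
    refine pos_of_hasDerivAt_neg_of_tendsto_zero (Q := fun t => F t + f t / ω t - r * F t)
      (Q' := fun t => f t * (r - ω' t / ω t ^ 2)) (fun t ht => ?_) (fun t ht => ?_) ?_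
    · have ht' : t ∈ Ioi a := lt_of_lt_of_le hy ht
      have hωt := hω0 t ht'
      refine (((hF t ht').add ((hf t ht').div (hω t ht') hωt)).sub
        ((hF t ht').const_mul r)).congr_deriv ?_
      field_simp
      ring
    · have ht' : t ∈ Ioi a := lt_trans hy ht
      exact mul_neg_of_pos_of_neg (hf_pos t ht') (sub_neg.2 (hr hy ht' ht))
    · simpa using (hF0.add hlim).sub (hF0.const_mul r)
  have hωy := hω0 y hy
  have hfy := (hf_pos y hy).ne'
  have heq : ω y + (ω y ^ 2 - ω' y) * (F y / f y) =
      (F y + f y / ω y - r * F y) * ω y ^ 2 / f y := by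
    rw [hr_def]
    field_simp
    ring
  rw [heq]
  exact div_pos (mul_pos hQ (pow_two_pos_of_ne_zero hωy)) (hf_pos y hy)

lemma millsRatio_comp_one_div_deriv2_neg (hF : ∀ x ∈ Ioi 0, HasDerivAt F (-f x) x)
    (hF0 : Tendsto F atTop (𝓝 0)) (hf : ∀ x ∈ Ioi 0, HasDerivAt f (ω x * f x) x)
    (hf_pos : ∀ x ∈ Ioi 0, 0 < f x) (hω : ∀ x ∈ Ioi 0, HasDerivAt ω (ω' x) x)
    (hω_neg : ∀ x ∈ Ioi 0, ω x < 0) (hω' : ∀ x ∈ Ioi 0, ω' x < ω x ^ 2)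
    (hlim1 : Tendsto (fun x => f x / (1 - x * ω x)) atTop (𝓝 0))
    (hlim2 : Tendsto (fun x => x * f x / (1 - x * ω x)) atTop (𝓝 0))
    (hs : StrictAntiOn (fun x => (x ^ 2 * ω' x - x * ω x + 2) /
      (x * ω x ^ 2 - x * ω' x - 2 * ω x)) (Ioi 0)) {y : ℝ} (hy : 0 < y) :
    2 * (-1 - ω y * (F y / f y)) + y * (ω y + (ω y ^ 2 - ω' y) * (F y / f y)) < 0 := by
  have hD : ∀ t ∈ Ioi (0 : ℝ), 0 < 1 - t * ω t := fun t ht => by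
    nlinarith [hω_neg t ht, mem_Ioi.1 ht]
  have hden : ∀ t ∈ Ioi (0 : ℝ), 0 < t * ω t ^ 2 - t * ω' t - 2 * ω t := fun t ht => by
    nlinarith [hω_neg t ht, hω' t ht, mem_Ioi.1 ht]
  set s := (y ^ 2 * ω' y - y * ω y + 2) / (y * ω y ^ 2 - y * ω' y - 2 * ω y)
  have hQ : 0 < y * f y / (1 - y * ω y) + s * (f y / (1 - y * ω y)) - F y := by
    refine pos_of_hasDerivAt_neg_of_tendsto_zero
      (Q := fun t => t * f t / (1 - t * ω t) + s * (f t / (1 - t * ω t)) - F t)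
      (Q' := fun t => f t / (1 - t * ω t) ^ 2 *
        (t ^ 2 * ω' t - t * ω t + 2 - s * (t * ω t ^ 2 - t * ω' t - 2 * ω t)))
      (fun t ht => ?_) (fun t ht => ?_) ?_
    · have ht' : t ∈ Ioi (0 : ℝ) := lt_of_lt_of_le hy ht
      have hDt := (hD t ht').ne'
      have hDen : HasDerivAt (fun u => 1 - u * ω u) (-(1 * ω t + t * ω' t)) t :=
        ((hasDerivAt_id' t).mul (hω t ht')).const_sub 1
      refine (((((hasDerivAt_id' t).mul (hf t ht')).div hDen hDt).add
        (((hf t ht').div hDen hDt).const_mul s)).sub (hF t ht')).congr_deriv ?_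
      simp only [Pi.mul_apply]
      field_simp
      ring
    · have ht' : t ∈ Ioi (0 : ℝ) := lt_trans hy ht
      refine mul_neg_of_pos_of_neg (div_pos (hf_pos t ht') (pow_pos (hD t ht') 2)) ?_
      exact sub_neg.2 ((div_lt_iff₀ (hden t ht')).1 (hs hy ht' ht))
    · simpa using (hlim2.add (hlim1.const_mul s)).sub hF0
  have hsden : s * (y * ω y ^ 2 - y * ω' y - 2 * ω y) = y ^ 2 * ω' y - y * ω y + 2 :=
    div_mul_cancel₀ _ (hden y hy).ne'
  have hfy := (hf_pos y hy).ne'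
  clear_value s
  generalize hD_def : 1 - y * ω y = D at hQ
  have hDy : D ≠ 0 := hD_def ▸ (hD y hy).ne'
  have heq : 2 * (-1 - ω y * (F y / f y)) + y * (ω y + (ω y ^ 2 - ω' y) * (F y / f y)) =
      -((y * f y / D + s * (f y / D) - F y) *
        (y * ω y ^ 2 - y * ω' y - 2 * ω y) / f y) := by
    field_simp
    linear_combination f y * hsden - f y * (y * ω y - 2) * hD_def
  rw [heq, neg_lt_zero]
  exact div_pos (mul_pos hQ (hden y hy)) (hf_pos y hy)

end MillsRatio

/-- **Theorem 2(b), strict reciprocal concavity.** Let `f : (0,∞) → (0,∞)` be a twice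
differentiable probability density with logarithmic derivative `ω = f′/f`, survival
function `F̄(x) = ∫ₓ^∞ f`, and Mills ratio `m = F̄/f`. If `f(x)/(1 − xω(x)) → 0`,
`xf(x)/(1 − xω(x)) → 0` and `f(x)/ω(x) → 0` as `x → ∞`, `ω′/ω²` is strictly increasing
on `(0,∞)`, and `x ↦ (x²ω′(x) − xω(x) + 2)/(xω(x)² − xω′(x) − 2ω(x))` is strictly
decreasing on `(0,∞)`, then `m` is strictly reciprocally concave on `(0,∞)`: `m` is
strictly convex on `(0,∞)` and `x ↦ m(1/x)` is strictly concave on `(0,∞)`. -/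
theorem millsRatio_strictly_reciprocally_concave' (f ω Fbar m : ℝ → ℝ)
    (hf_pos : ∀ x ∈ Set.Ioi (0 : ℝ), 0 < f x)
    (hf_diff : ∀ x ∈ Set.Ioi (0 : ℝ), DifferentiableAt ℝ f x)
    (hf_diff2 : ∀ x ∈ Set.Ioi (0 : ℝ), DifferentiableAt ℝ (deriv f) x)
    (hf_pdf : ∫ t in Set.Ioi (0 : ℝ), f t = 1)
    (hω : ∀ x, ω x = deriv f x / f x)
    (hFbar : ∀ x, Fbar x = ∫ t in Set.Ioi x, f t)
    (hm : ∀ x, m x = Fbar x / f x)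
    (hlim1 : Filter.Tendsto (fun x => f x / (1 - x * ω x)) Filter.atTop (nhds 0))
    (hlim2 : Filter.Tendsto (fun x => x * f x / (1 - x * ω x)) Filter.atTop (nhds 0))
    (hlim3 : Filter.Tendsto (fun x => f x / ω x) Filter.atTop (nhds 0))
    (hinc : StrictMonoOn (fun x => deriv ω x / (ω x) ^ 2) (Set.Ioi 0))
    (hdec : StrictAntiOn
      (fun x => (x ^ 2 * deriv ω x - x * ω x + 2) /
        (x * (ω x) ^ 2 - x * deriv ω x - 2 * ω x)) (Set.Ioi 0)) :
    StrictConvexOn ℝ (Set.Ioi 0) m ∧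
      StrictConcaveOn ℝ (Set.Ioi 0) (fun x : ℝ => m (1 / x)) := by
  have hint : IntegrableOn f (Ioi 0) := by
    by_contra h
    exact zero_ne_one (integral_undef h ▸ hf_pdf)
  obtain rfl : m = fun x => Fbar x / f x := funext hm
  obtain rfl : Fbar = fun x => ∫ t in Ioi x, f t := funext hFbar
  have hf : ∀ x ∈ Ioi (0 : ℝ), HasDerivAt f (ω x * f x) x := fun x hx =>
    (hf_diff x hx).hasDerivAt.congr_deriv (by rw [hω]; field_simp [(hf_pos x hx).ne'])
  have hω' : ∀ x ∈ Ioi (0 : ℝ), HasDerivAt ω (deriv ω x) x := fun x hx => by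
    rw [funext hω]
    exact ((hf_diff2 x hx).div (hf_diff x hx) (hf_pos x hx).ne').hasDerivAt
  have hF : ∀ x ∈ Ioi (0 : ℝ), HasDerivAt (fun x => ∫ t in Ioi x, f t) (-f x) x := fun x hx =>
    hasDerivAt_integral_Ioi hint hx (hf_diff x hx).continuousAt
  have hF0 : Tendsto (fun x => ∫ t in Ioi x, f t) atTop (𝓝 0) :=
    tendsto_integral_Ioi_zero tendsto_id
  have hω_neg := neg_of_hasDerivAt_mul_of_integrableOn hf hf_pos hω' hinc hint
  have hm'' := fun y (hy : y ∈ Ioi (0 : ℝ)) => millsRatio_deriv2_pos hF hF0 hf hf_pos hω'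
    (fun x hx => (hω_neg x hx).ne) hlim3 hinc hy
  have hω'_lt : ∀ x ∈ Ioi (0 : ℝ), deriv ω x < ω x ^ 2 := fun x hx => by
    have hm_pos : 0 < (∫ t in Ioi x, f t) / f x := div_pos
      (integral_Ioi_pos (hint.mono_set (Ioi_subset_Ioi (le_of_lt hx)))
        fun t ht => hf_pos t (mem_Ioi.2 (lt_trans hx ht))) (hf_pos x hx)
    nlinarith [hm'' x hx, hω_neg x hx]
  have hm_deriv := fun x (hx : x ∈ Ioi (0 : ℝ)) =>
    hasDerivAt_millsRatio (hF x hx) (hf x hx) (hf_pos x hx).ne'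
  have hm_deriv2 := fun x (hx : x ∈ Ioi (0 : ℝ)) =>
    hasDerivAt_millsRatio_deriv (hF x hx) (hf x hx) (hf_pos x hx).ne' (hω' x hx)
  exact ⟨strictConvexOn_of_hasDerivAt2_pos (convex_Ioi 0) isOpen_Ioi hm_deriv hm_deriv2 hm'',
    strictConcaveOn_comp_one_div hm_deriv hm_deriv2 fun y hy =>
      millsRatio_comp_one_div_deriv2_neg hF hF0 hf hf_pos hω' hω_neg hω'_lt hlim1 hlim2 hdec hy⟩
end

section
/- For 1 ≤ α ≤ 2, the Mills ratio m(·; α) of the gamma distribution is reciprocally concave on (0,∞): m(·; α) is convex on (0,∞) and x ↦ m(1/x; α) is concave on (0,∞). -/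
/-- The Mills ratio of the gamma distribution with shape parameter `α`:
`m(x; α) = Γ(α, x)/(x^(α−1) e^(−x))`, where `Γ(α, x) = ∫ₓ^∞ t^(α−1) e^(−t) dt` is the
upper incomplete gamma function. -/
noncomputable def gammaMills (α x : ℝ) : ℝ :=
  (∫ t in Set.Ioi x, t ^ (α - 1) * Real.exp (-t)) / (x ^ (α - 1) * Real.exp (-x))

/-!
Substituting `t = x + s` gives `m(x; α) = ∫₀^∞ e^(-s) (1 + s/x)^(α-1) ds`, hence also
`m(1/x; α) = ∫₀^∞ e^(-s) (1 + s x)^(α-1) ds`. For fixed `s ≥ 0` and `β = α - 1 ∈ [0, 1]`, the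
integrand `x ↦ (1 + s/x)^β = exp (β (log (x + s) - log x))` is convex, `log (x + s) - log x` having
second derivative `1/x² - 1/(x + s)² ≥ 0`, while `x ↦ (1 + s x)^β` is a concave power of an affine
function. Integrating against the positive weight `e^(-s)` preserves convexity and concavity.
-/

open Set MeasureTheory Real

section ParametricIntegral

variable {E ι : Type*} [AddCommMonoid E] [Module ℝ E] [MeasurableSpace ι] {μ : Measure ι}
  {D : Set E} {f : E → ι → ℝ}

theorem convexOn_integral (hD : Convex ℝ D) (hf : ∀ x ∈ D, Integrable (f x) μ)
    (hconv : ∀ᵐ t ∂μ, ConvexOn ℝ D (f · t)) : ConvexOn ℝ D fun x => ∫ t, f x t ∂μ := by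
  refine ⟨hD, fun x hx y hy a b ha hb hab => ?_⟩
  calc ∫ t, f (a • x + b • y) t ∂μ ≤ ∫ t, (a * f x t + b * f y t) ∂μ :=
        integral_mono_ae (hf _ (hD hx hy ha hb hab))
          (((hf x hx).const_mul a).add ((hf y hy).const_mul b))
          (hconv.mono fun t ht => ht.2 hx hy ha hb hab)
    _ = a * ∫ t, f x t ∂μ + b * ∫ t, f y t ∂μ := by
        rw [integral_add ((hf x hx).const_mul a) ((hf y hy).const_mul b), integral_const_mul,
          integral_const_mul]

theorem concaveOn_integral (hD : Convex ℝ D) (hf : ∀ x ∈ D, Integrable (f x) μ)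
    (hconc : ∀ᵐ t ∂μ, ConcaveOn ℝ D (f · t)) : ConcaveOn ℝ D fun x => ∫ t, f x t ∂μ := by
  have := convexOn_integral (f := fun x t => -f x t) hD (fun x hx => (hf x hx).neg)
    (hconc.mono fun t ht => ht.neg)
  simpa only [integral_neg, Pi.neg_def, neg_neg] using this.neg

end ParametricIntegral

theorem ConvexOn.exp {E : Type*} [AddCommMonoid E] [Module ℝ E] {D : Set E} {f : E → ℝ}
    (hf : ConvexOn ℝ D f) : ConvexOn ℝ D fun x => exp (f x) :=
  ⟨hf.1, fun _ hx _ hy _ _ ha hb hab =>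
    (exp_le_exp.2 (hf.2 hx hy ha hb hab)).trans (convexOn_exp.2 trivial trivial ha hb hab)⟩

theorem convexOn_log_add_sub_log {s : ℝ} (hs : 0 ≤ s) :
    ConvexOn ℝ (Ioi 0) fun x => log (x + s) - log x := by
  have hf' : ∀ x ∈ Ioi (0 : ℝ),
      HasDerivAt (fun x => log (x + s) - log x) ((x + s)⁻¹ - x⁻¹) x := fun x (hx : 0 < x) =>
    ((hasDerivAt_log (by positivity)).comp_add_const x s).fun_sub (hasDerivAt_log hx.ne')
  have hf'' : ∀ x ∈ Ioi (0 : ℝ),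
      HasDerivAt (fun x => (x + s)⁻¹ - x⁻¹) ((x ^ 2)⁻¹ - ((x + s) ^ 2)⁻¹) x := fun x (hx : 0 < x) =>
    (((hasDerivAt_inv (by positivity)).comp_add_const x s).fun_sub
      (hasDerivAt_inv hx.ne')).congr_deriv (by ring)
  refine convexOn_of_hasDerivWithinAt2_nonneg (f' := fun x => (x + s)⁻¹ - x⁻¹)
    (f'' := fun x => (x ^ 2)⁻¹ - ((x + s) ^ 2)⁻¹) (convex_Ioi 0)
    (fun x hx => (hf' x hx).continuousAt.continuousWithinAt) ?_ ?_ ?_ <;> rw [interior_Ioi]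
  · exact fun x hx => (hf' x hx).hasDerivWithinAt
  · exact fun x hx => (hf'' x hx).hasDerivWithinAt
  · intro x (hx : 0 < x)
    have : (x ^ 2)⁻¹ ≥ ((x + s) ^ 2)⁻¹ :=
      inv_anti₀ (by positivity) (pow_le_pow_left₀ hx.le (by linarith) 2)
    linarith

theorem convexOn_one_add_div_rpow {s β : ℝ} (hs : 0 ≤ s) (hβ : 0 ≤ β) :
    ConvexOn ℝ (Ioi 0) fun x => (1 + s / x) ^ β := by
  refine ((convexOn_log_add_sub_log hs).smul hβ).exp.congr fun x (hx : 0 < x) => ?_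
  dsimp only
  rw [← log_div (by positivity) hx.ne', smul_eq_mul, mul_comm, ← rpow_def_of_pos (by positivity),
    add_div, div_self hx.ne']

theorem concaveOn_one_add_mul_rpow {s β : ℝ} (hs : 0 ≤ s) (hβ₀ : 0 ≤ β) (hβ₁ : β ≤ 1) :
    ConcaveOn ℝ (Ici 0) fun x => (1 + s * x) ^ β := by
  refine ⟨convex_Ici 0, fun x hx y hy a b ha hb hab => ?_⟩
  have h := (concaveOn_rpow hβ₀ hβ₁).2 (add_nonneg zero_le_one (mul_nonneg hs hx))
    (add_nonneg zero_le_one (mul_nonneg hs hy)) ha hb hab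
  convert h using 2
  simp only [smul_eq_mul]
  linear_combination -hab

theorem integrableOn_exp_neg_mul_one_add_mul_rpow {c β : ℝ} (hc : 0 ≤ c) (hβ : β ≤ 1) :
    IntegrableOn (fun s => exp (-s) * (1 + s * c) ^ β) (Ioi 0) := by
  have hdom : IntegrableOn (fun s => exp (-s) + c * (exp (-s) * s ^ ((2 : ℝ) - 1))) (Ioi 0) :=
    (exp_neg_integrableOn_Ioi 0 one_pos |>.congr_fun (fun s _ => by simp) measurableSet_Ioi).add
      ((GammaIntegral_convergent two_pos).const_mul c)
  refine hdom.mono' ?_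
    ((ae_restrict_iff' measurableSet_Ioi).2 (ae_of_all _ fun s (hs : 0 < s) => ?_))
  · exact (ContinuousOn.mul (continuous_exp.comp continuous_neg).continuousOn
      (ContinuousOn.rpow_const (by fun_prop) fun s (hs : 0 < s) => Or.inl (by positivity)))
      |>.aestronglyMeasurable measurableSet_Ioi
  · have hbase : 1 ≤ 1 + s * c := le_add_of_nonneg_right (mul_nonneg hs.le hc)
    rw [norm_of_nonneg (by positivity)]
    calc exp (-s) * (1 + s * c) ^ β ≤ exp (-s) * (1 + s * c) := by
          gcongr
          simpa using rpow_le_rpow_of_exponent_le hbase hβ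
      _ = _ := by norm_num; ring

theorem setIntegral_Ioi_zero_comp_add_right {E : Type*} [NormedAddCommGroup E] [NormedSpace ℝ E]
    (f : ℝ → E) (a : ℝ) : ∫ s in Ioi 0, f (s + a) = ∫ t in Ioi a, f t := by
  rw [← (measurePreserving_add_right volume a).setIntegral_preimage_emb
    (MeasurableEquiv.addRight a).measurableEmbedding f (Ioi a), preimage_add_const_Ioi, sub_self]

theorem gammaMills_eq_integral (α : ℝ) {x : ℝ} (hx : 0 < x) :
    gammaMills α x = ∫ s in Ioi 0, exp (-s) * (1 + s / x) ^ (α - 1) := by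
  rw [gammaMills, ← setIntegral_Ioi_zero_comp_add_right, ← integral_div]
  refine setIntegral_congr_fun measurableSet_Ioi fun s (hs : 0 < s) => ?_
  have hpow : (s + x) ^ (α - 1) = (1 + s / x) ^ (α - 1) * x ^ (α - 1) := by
    rw [← mul_rpow (by positivity) hx.le, add_mul, one_mul, div_mul_cancel₀ s hx.ne', add_comm]
  rw [hpow, neg_add, exp_add]
  field_simp

theorem gammaMills_one_div_eq_integral (α : ℝ) {x : ℝ} (hx : 0 < x) :
    gammaMills α (1 / x) = ∫ s in Ioi 0, exp (-s) * (1 + s * x) ^ (α - 1) := by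
  rw [gammaMills_eq_integral α (one_div_pos.2 hx)]
  simp only [one_div, div_inv_eq_mul]

/-- For `1 ≤ α ≤ 2`, the Mills ratio `m(·; α)` of the gamma distribution is reciprocally
concave on `(0,∞)`: `m(·; α)` is convex on `(0,∞)` and `x ↦ m(1/x; α)` is concave on
`(0,∞)`. -/
theorem gammaMills_reciprocally_concave (α : ℝ) (hα₁ : 1 ≤ α) (hα₂ : α ≤ 2) :
    ConvexOn ℝ (Set.Ioi 0) (gammaMills α) ∧
      ConcaveOn ℝ (Set.Ioi 0) (fun x : ℝ => gammaMills α (1 / x)) := by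
  have hβ₀ : 0 ≤ α - 1 := by linarith
  have hβ₁ : α - 1 ≤ 1 := by linarith
  have ae_nonneg : ∀ᵐ s ∂(volume.restrict (Ioi (0 : ℝ))), 0 ≤ s :=
    ae_restrict_of_forall_mem measurableSet_Ioi fun s hs => le_of_lt hs
  constructor
  · have hconv : ∀ᵐ s ∂(volume.restrict (Ioi (0 : ℝ))),
        ConvexOn ℝ (Ioi 0) fun x => exp (-s) * (1 + s / x) ^ (α - 1) :=
      ae_nonneg.mono fun s hs => (convexOn_one_add_div_rpow hs hβ₀).smul (exp_pos (-s)).le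
    refine (convexOn_integral (convex_Ioi 0) (fun x (hx : 0 < x) => ?_) hconv).congr
      fun x hx => (gammaMills_eq_integral α hx).symm
    simpa only [div_eq_mul_inv, IntegrableOn] using
      integrableOn_exp_neg_mul_one_add_mul_rpow (inv_nonneg.2 hx.le) hβ₁
  · have hconc : ∀ᵐ s ∂(volume.restrict (Ioi (0 : ℝ))),
        ConcaveOn ℝ (Ioi 0) fun x => exp (-s) * (1 + s * x) ^ (α - 1) :=
      ae_nonneg.mono fun s hs => ((concaveOn_one_add_mul_rpow hs hβ₀ hβ₁).subset
        Ioi_subset_Ici_self (convex_Ioi 0)).smul (exp_pos (-s)).le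
    exact (concaveOn_integral (convex_Ioi 0)
      (fun x (hx : 0 < x) => integrableOn_exp_neg_mul_one_add_mul_rpow hx.le hβ₁) hconc).congr
      fun x hx => (gammaMills_one_div_eq_integral α hx).symm
end
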